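/- arXiv:2410.11969 — 3 statements merged into one kernel-verified Lean document; each statement's English description precedes it below -/
import Mathlib

section
/- Let φ₁, φ₂ : ℝ → ℝ be smooth and nowhere zero, and define f₁(x¹,x²) = φ₁(x¹), f₂(x¹,x²) = φ₂(x¹). Let W¹, W² : ℝ → ℝ be smooth and define V¹(x¹,x²) = W¹(x¹), V²(x¹,x²) = W²(x¹). Then (V¹, V²) satisfies the Killing system for (f₁, f₂) if and only if one of the following holds: (i) there exist c₁ ∈ ℝ \ {0} and c₂ ∈ ℝ with W¹ ≡ c₁, W² ≡ c₂, and φ₂ constant; (ii) W¹ ≡ 0 and there exists c₂ ∈ ℝ with W²(t) = c₂/φ₂(t) for all t ∈ ℝ. -/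
open Real

/-- Partial derivative in the `x¹` direction on `ℝ²`. -/
noncomputable def pd1 (f : ℝ × ℝ → ℝ) (p : ℝ × ℝ) : ℝ := fderiv ℝ f p (1, 0)

/-- Partial derivative in the `x²` direction on `ℝ²`. -/
noncomputable def pd2 (f : ℝ × ℝ → ℝ) (p : ℝ × ℝ) : ℝ := fderiv ℝ f p (0, 1)

/-- `(V¹, V²)` satisfies the Killing system for `(f₁, f₂)`, i.e. `V = V¹E₁ + V²E₂` is a
Killing vector field for the metric `g = f₁⁻² dx¹⊗dx¹ + f₂⁻² dx²⊗dx²` on `ℝ²`. -/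
def KillingSystem (f₁ f₂ V₁ V₂ : ℝ × ℝ → ℝ) : Prop :=
  ∀ p : ℝ × ℝ,
    f₁ p * pd1 V₁ p - f₂ p / f₁ p * pd2 f₁ p * V₂ p = 0 ∧
    f₂ p * pd2 V₂ p - f₁ p / f₂ p * pd1 f₂ p * V₁ p = 0 ∧
    f₁ p * pd1 V₂ p + f₂ p * pd2 V₁ p + f₂ p / f₁ p * pd2 f₁ p * V₁ p
      + f₁ p / f₂ p * pd1 f₂ p * V₂ p = 0

lemma pd1_fst (f : ℝ → ℝ) (hf : Differentiable ℝ f) (p : ℝ × ℝ) :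
    pd1 (fun q => f q.1) p = deriv f p.1 := by
  have h : HasFDerivAt (fun q : ℝ × ℝ => f q.1)
      ((fderiv ℝ f p.1).comp (ContinuousLinearMap.fst ℝ ℝ ℝ)) p :=
    ((hf p.1).hasFDerivAt).comp p hasFDerivAt_fst
  rw [pd1, h.fderiv]
  simp [fderiv_apply_one_eq_deriv]

lemma pd2_fst (f : ℝ → ℝ) (hf : Differentiable ℝ f) (p : ℝ × ℝ) :
    pd2 (fun q => f q.1) p = 0 := by
  have h : HasFDerivAt (fun q : ℝ × ℝ => f q.1)
      ((fderiv ℝ f p.1).comp (ContinuousLinearMap.fst ℝ ℝ ℝ)) p :=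
    ((hf p.1).hasFDerivAt).comp p hasFDerivAt_fst
  rw [pd2, h.fderiv]
  simp

/-- If `f₁ = φ₁(x¹)`, `f₂ = φ₂(x¹)`, `V¹ = W¹(x¹)`, `V² = W²(x¹)`, then `V` is a Killing
vector field iff either (i) `W¹ ≡ c₁ ≠ 0`, `W² ≡ c₂` and `φ₂` is constant, or
(ii) `W¹ ≡ 0` and `W² = c₂/φ₂`. -/
theorem killing_iff_of_all_depend_x₁ (φ₁ φ₂ : ℝ → ℝ)
    (hφ₁ : ContDiff ℝ (⊤ : ℕ∞) φ₁) (hφ₂ : ContDiff ℝ (⊤ : ℕ∞) φ₂)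
    (hφ₁0 : ∀ t, φ₁ t ≠ 0) (hφ₂0 : ∀ t, φ₂ t ≠ 0)
    (W₁ W₂ : ℝ → ℝ) (hW₁ : ContDiff ℝ (⊤ : ℕ∞) W₁) (hW₂ : ContDiff ℝ (⊤ : ℕ∞) W₂) :
    KillingSystem (fun p => φ₁ p.1) (fun p => φ₂ p.1)
      (fun p => W₁ p.1) (fun p => W₂ p.1) ↔
    ((∃ c₁ : ℝ, c₁ ≠ 0 ∧ ∀ t, W₁ t = c₁) ∧ (∃ c₂ : ℝ, ∀ t, W₂ t = c₂) ∧
        (∃ k : ℝ, ∀ t, φ₂ t = k)) ∨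
    ((∀ t, W₁ t = 0) ∧ ∃ c₂ : ℝ, ∀ t, W₂ t = c₂ / φ₂ t) := by
  have dφ₂ : Differentiable ℝ φ₂ := hφ₂.differentiable (by simp)
  have dW₁ : Differentiable ℝ W₁ := hW₁.differentiable (by simp)
  have dW₂ : Differentiable ℝ W₂ := hW₂.differentiable (by simp)
  have dφ₁ : Differentiable ℝ φ₁ := hφ₁.differentiable (by simp)
  constructor
  · intro hK
    -- extract the pointwise ODEs along x¹
    have h1 : ∀ t : ℝ, deriv W₁ t = 0 := by
      intro t
      have := (hK (t, 0)).1
      rw [pd1_fst W₁ dW₁, pd2_fst φ₁ dφ₁] at this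
      simp only [mul_zero, zero_mul, sub_zero] at this
      exact (mul_eq_zero.1 this).resolve_left (hφ₁0 t)
    have hW1c : ∀ t, W₁ t = W₁ 0 := fun t =>
      is_const_of_deriv_eq_zero dW₁ h1 t 0
    have h2 : ∀ t : ℝ, deriv φ₂ t * W₁ t = 0 := by
      intro t
      have := (hK (t, 0)).2.1
      rw [pd1_fst φ₂ dφ₂, pd2_fst W₂ dW₂] at this
      simp only [mul_zero, zero_sub, neg_eq_zero] at this
      have hne : φ₁ t / φ₂ t ≠ 0 := div_ne_zero (hφ₁0 t) (hφ₂0 t)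
      have := mul_eq_zero.1 this
      rcases this with h | h
      · rcases mul_eq_zero.1 h with h | h
        · exact absurd h hne
        · simp [h]
      · simp [h]
    have h3 : ∀ t : ℝ, deriv (fun s => φ₂ s * W₂ s) t = 0 := by
      intro t
      have hk3 := (hK (t, 0)).2.2
      rw [pd1_fst W₂ dW₂, pd2_fst W₁ dW₁, pd2_fst φ₁ dφ₁, pd1_fst φ₂ dφ₂] at hk3
      simp only [mul_zero, zero_mul, add_zero, zero_add] at hk3
      -- hk3 : φ₁ t * deriv W₂ t + φ₁ t / φ₂ t * deriv φ₂ t * W₂ t = 0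
      rw [deriv_fun_mul (dφ₂ t) (dW₂ t)]
      have h1t := hφ₁0 t
      have h2t := hφ₂0 t
      have hfac : φ₁ t * (φ₂ t * deriv W₂ t + deriv φ₂ t * W₂ t) = 0 := by
        have e2 : φ₁ t / φ₂ t * deriv φ₂ t * W₂ t
            = φ₁ t * deriv φ₂ t * W₂ t / φ₂ t := by ring
        rw [e2] at hk3
        field_simp at hk3
        linear_combination hk3
      have := (mul_eq_zero.1 hfac).resolve_left h1t
      linear_combination this
    have hc : ∀ t, φ₂ t * W₂ t = φ₂ 0 * W₂ 0 := fun t =>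
      is_const_of_deriv_eq_zero (dφ₂.mul dW₂) h3 t 0
    by_cases h0 : W₁ 0 = 0
    · right
      refine ⟨fun t => by rw [hW1c t, h0], φ₂ 0 * W₂ 0, fun t => ?_⟩
      rw [eq_div_iff (hφ₂0 t), mul_comm]
      exact hc t
    · left
      have hderφ₂ : ∀ t, deriv φ₂ t = 0 := by
        intro t
        have := h2 t
        rw [hW1c t] at this
        exact (mul_eq_zero.1 this).resolve_right h0
      have hφ₂c : ∀ t, φ₂ t = φ₂ 0 := fun t =>
        is_const_of_deriv_eq_zero dφ₂ hderφ₂ t 0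
      refine ⟨⟨W₁ 0, h0, hW1c⟩, ⟨W₂ 0, fun t => ?_⟩, ⟨φ₂ 0, hφ₂c⟩⟩
      have := hc t
      rw [hφ₂c t] at this
      exact mul_left_cancel₀ (hφ₂0 0) this
  · rintro (⟨⟨c₁, hc₁, hW1⟩, ⟨c₂, hW2⟩, ⟨k, hφ2⟩⟩ | ⟨hW1, c₂, hW2⟩)
    · have eW1 : W₁ = fun _ => c₁ := funext hW1
      have eW2 : W₂ = fun _ => c₂ := funext hW2
      have eφ2 : φ₂ = fun _ => k := funext hφ2
      intro p
      rw [eW1, eW2, eφ2]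
      rw [pd1_fst _ (differentiable_const c₁), pd2_fst _ (differentiable_const c₁),
        pd1_fst _ (differentiable_const c₂), pd2_fst _ (differentiable_const c₂),
        pd1_fst _ (differentiable_const k), pd2_fst _ dφ₁]
      simp [deriv_const]
    · have eW1 : W₁ = fun _ => (0:ℝ) := funext hW1
      have eW2 : W₂ = fun t => c₂ / φ₂ t := funext hW2
      intro p
      rw [eW1, eW2]
      rw [pd1_fst _ (differentiable_const 0), pd2_fst _ (differentiable_const 0),
        pd1_fst (fun t => c₂ / φ₂ t) ((differentiable_const c₂).div dφ₂ hφ₂0),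
        pd2_fst (fun t => c₂ / φ₂ t) ((differentiable_const c₂).div dφ₂ hφ₂0),
        pd1_fst _ dφ₂, pd2_fst _ dφ₁]
      have hd : deriv (fun t => c₂ / φ₂ t) p.1
          = -(c₂ * deriv φ₂ p.1) / (φ₂ p.1)^2 := by
        have : deriv (fun t => c₂ / φ₂ t) p.1 = (0 * φ₂ p.1 - c₂ * deriv φ₂ p.1) / φ₂ p.1 ^ 2 :=
          ((hasDerivAt_const p.1 c₂).div (dφ₂ p.1).hasDerivAt (hφ₂0 p.1)).deriv
        rw [this]; ring
      rw [hd]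
      have h1 := hφ₁0 p.1
      have h2 := hφ₂0 p.1
      refine ⟨by simp, by simp [deriv_const], ?_⟩
      field_simp
      ring
end

section
/- Let φ₁, φ₂ : ℝ → ℝ be smooth and nowhere zero, and define f₁(x¹,x²) = φ₁(x²), f₂(x¹,x²) = φ₂(x¹). Let W¹, W² : ℝ → ℝ be smooth and define V¹(x¹,x²) = W¹(x²), V²(x¹,x²) = W²(x¹). If (V¹, V²) satisfies the Killing system for (f₁, f₂) and W¹ ≡ 0, then either W² ≡ 0 (so V is the zero vector field) or φ₁ is constant. -/
open Real

lemma fderiv_comp_snd (f : ℝ → ℝ) (hf : Differentiable ℝ f) (p : ℝ × ℝ) (v : ℝ × ℝ) :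
    fderiv ℝ (fun q : ℝ × ℝ => f q.2) p v = deriv f p.2 * v.2 := by
  have h : HasFDerivAt (fun q : ℝ × ℝ => f q.2)
      ((fderiv ℝ f p.2).comp (ContinuousLinearMap.snd ℝ ℝ ℝ)) p :=
    (hf p.2).hasFDerivAt.comp p hasFDerivAt_snd
  rw [h.fderiv]
  simp only [ContinuousLinearMap.coe_comp', Function.comp, ContinuousLinearMap.coe_snd']
  rw [show v.2 = v.2 • (1:ℝ) by simp, (fderiv ℝ f p.2).map_smul]
  simp [fderiv_apply_one_eq_deriv, mul_comm]

lemma pd1_comp_snd (f : ℝ → ℝ) (hf : Differentiable ℝ f) (p : ℝ × ℝ) :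
    pd1 (fun q : ℝ × ℝ => f q.2) p = 0 := by
  simp [pd1, fderiv_comp_snd f hf]

lemma pd2_comp_snd (f : ℝ → ℝ) (hf : Differentiable ℝ f) (p : ℝ × ℝ) :
    pd2 (fun q : ℝ × ℝ => f q.2) p = deriv f p.2 := by
  simp [pd2, fderiv_comp_snd f hf]

/-- Under crossed dependence, if `V` is a Killing vector field with `W¹ ≡ 0`, then either
`V` is the zero vector field or `φ₁` is constant. -/
theorem killing_zero_component (φ₁ φ₂ : ℝ → ℝ)
    (hφ₁ : ContDiff ℝ (⊤ : ℕ∞) φ₁) (hφ₂ : ContDiff ℝ (⊤ : ℕ∞) φ₂)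
    (hφ₁0 : ∀ t, φ₁ t ≠ 0) (hφ₂0 : ∀ t, φ₂ t ≠ 0)
    (W₁ W₂ : ℝ → ℝ) (hW₁ : ContDiff ℝ (⊤ : ℕ∞) W₁) (hW₂ : ContDiff ℝ (⊤ : ℕ∞) W₂)
    (hK : KillingSystem (fun p => φ₁ p.2) (fun p => φ₂ p.1)
      (fun p => W₁ p.2) (fun p => W₂ p.1))
    (hW₁0 : ∀ t, W₁ t = 0) :
    (∀ s, W₂ s = 0) ∨ (∃ c : ℝ, ∀ t, φ₁ t = c) := by
  have hφ₁d : Differentiable ℝ φ₁ := hφ₁.differentiable (by simp)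
  have hW₁d : Differentiable ℝ W₁ := hW₁.differentiable (by simp)
  have key : ∀ s t : ℝ, deriv φ₁ t * W₂ s = 0 := by
    intro s t
    have h1 := (hK (s, t)).1
    rw [pd1_comp_snd W₁ hW₁d, pd2_comp_snd φ₁ hφ₁d] at h1
    simp only [mul_zero, zero_sub, neg_eq_zero, div_eq_mul_inv] at h1
    rcases mul_eq_zero.1 h1 with h | h
    · rcases mul_eq_zero.1 h with h' | h'
      · rcases mul_eq_zero.1 h' with h'' | h''
        · exact absurd h'' (hφ₂0 s)
        · exact absurd (inv_eq_zero.1 h'') (hφ₁0 t)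
      · rw [h', zero_mul]
    · rw [h, mul_zero]
  by_cases hW : ∀ s, W₂ s = 0
  · exact Or.inl hW
  · right
    push_neg at hW
    obtain ⟨s, hs⟩ := hW
    have hd : ∀ t, deriv φ₁ t = 0 := fun t =>
      (mul_eq_zero.1 (key s t)).resolve_right hs
    exact ⟨φ₁ 0, fun t => is_const_of_deriv_eq_zero hφ₁d hd t 0⟩
end

section
/- Let φ : ℝ → ℝ be smooth and nowhere zero, let k₂ ∈ ℝ \ {0}, and define f₁(x¹,x²) = φ(x²), f₂(x¹,x²) = k₂. If smooth functions V¹, V² : ℝ² → ℝ satisfy the Killing system for (f₁, f₂) and V² is not identically zero, then the function t ↦ (φ''(t)·φ(t) − φ'(t)²)/φ(t)⁴ is constant on ℝ. -/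
open Real

lemma hasDerivAt_pd1 (f : ℝ × ℝ → ℝ) (hf : Differentiable ℝ f) (x y : ℝ) :
    HasDerivAt (fun s => f (s, y)) (pd1 f (x, y)) x := by
  have h1 : HasDerivAt (fun s : ℝ => ((s, y) : ℝ × ℝ)) ((1 : ℝ), (0 : ℝ)) x :=
    (hasDerivAt_id x).prodMk (hasDerivAt_const x y)
  simpa [pd1, Function.comp_def] using ((hf (x, y)).hasFDerivAt.comp_hasDerivAt x h1)

lemma hasDerivAt_pd2 (f : ℝ × ℝ → ℝ) (hf : Differentiable ℝ f) (x y : ℝ) :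
    HasDerivAt (fun t => f (x, t)) (pd2 f (x, y)) y := by
  have h1 : HasDerivAt (fun t : ℝ => ((x, t) : ℝ × ℝ)) ((0 : ℝ), (1 : ℝ)) y :=
    (hasDerivAt_const y x).prodMk (hasDerivAt_id y)
  simpa [pd2, Function.comp_def] using ((hf (x, y)).hasFDerivAt.comp_hasDerivAt y h1)

lemma pd1_contDiff (f : ℝ × ℝ → ℝ) (hf : ContDiff ℝ (⊤ : ℕ∞) f) : ContDiff ℝ (⊤ : ℕ∞) (pd1 f) := by
  exact ((hf.of_le (by simp)).fderiv_right (le_refl _)).clm_apply contDiff_const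

lemma pd2_contDiff (f : ℝ × ℝ → ℝ) (hf : ContDiff ℝ (⊤ : ℕ∞) f) : ContDiff ℝ (⊤ : ℕ∞) (pd2 f) := by
  exact ((hf.of_le (by simp)).fderiv_right (le_refl _)).clm_apply contDiff_const

lemma pd_symm (f : ℝ × ℝ → ℝ) (hf : ContDiff ℝ (⊤ : ℕ∞) f) (p : ℝ × ℝ) :
    pd1 (pd2 f) p = pd2 (pd1 f) p := by
  have hsymm : IsSymmSndFDerivAt ℝ f p :=
    hf.contDiffAt.isSymmSndFDerivAt (by rw [minSmoothness_of_isRCLikeNormedField]; exact WithTop.coe_le_coe.mpr le_top)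
  have hdf : Differentiable ℝ (fderiv ℝ f) :=
    ((hf.of_le (by exact WithTop.coe_le_coe.mpr le_top)).fderiv_right (m := 1) (le_refl _)).differentiable (by simp)
  have h1 : ∀ v w : ℝ × ℝ,
      fderiv ℝ (fun q => fderiv ℝ f q v) p w = fderiv ℝ (fderiv ℝ f) p w v := by
    intro v w
    rw [fderiv_clm_apply (hdf p) (differentiableAt_const v)]
    simp
  calc pd1 (pd2 f) p = fderiv ℝ (fun q => fderiv ℝ f q (0, 1)) p (1, 0) := rfl
    _ = fderiv ℝ (fderiv ℝ f) p (1, 0) (0, 1) := h1 _ _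
    _ = fderiv ℝ (fderiv ℝ f) p (0, 1) (1, 0) := hsymm _ _
    _ = fderiv ℝ (fun q => fderiv ℝ f q (1, 0)) p (0, 1) := (h1 _ _).symm
    _ = pd2 (pd1 f) p := rfl

/-- If `f₁ = φ(x²)`, `f₂ ≡ k₂ ≠ 0`, `(V¹,V²)` satisfies the Killing system and `V²` is
not identically zero, then `(φ''·φ − φ'²)/φ⁴` is constant. -/
theorem killing_necessary_condition_on_φ (φ : ℝ → ℝ)
    (hφ : ContDiff ℝ (⊤ : ℕ∞) φ) (hφ0 : ∀ t, φ t ≠ 0) (k₂ : ℝ) (hk₂ : k₂ ≠ 0)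
    (V₁ V₂ : ℝ × ℝ → ℝ) (hV₁ : ContDiff ℝ (⊤ : ℕ∞) V₁) (hV₂ : ContDiff ℝ (⊤ : ℕ∞) V₂)
    (hK : KillingSystem (fun p => φ p.2) (fun _ => k₂) V₁ V₂)
    (hV₂0 : ¬ ∀ p : ℝ × ℝ, V₂ p = 0) :
    ∃ c : ℝ, ∀ t : ℝ,
      (deriv (deriv φ) t * φ t - deriv φ t ^ 2) / φ t ^ 4 = c := by
  have hφ' : Differentiable ℝ φ := hφ.differentiable (by simp)
  have hgC : ContDiff ℝ (⊤ : ℕ∞) (deriv φ) :=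
    (contDiff_infty_iff_deriv.mp (hφ.of_le (by simp))).2
  set g := deriv φ with hgdef
  have hgd : Differentiable ℝ g := hgC.differentiable (by simp)
  have hV₁d : Differentiable ℝ V₁ := hV₁.differentiable (by simp)
  have hV₂d : Differentiable ℝ V₂ := hV₂.differentiable (by simp)
  set ψ : ℝ → ℝ := fun x => V₂ (x, 0) with hψdef
  have hψC : ContDiff ℝ (⊤ : ℕ∞) ψ :=
    (hV₂.of_le (by simp)).comp (contDiff_id.prodMk contDiff_const)
  have hf1d : Differentiable ℝ (fun q : ℝ × ℝ => φ q.2) := hφ'.comp differentiable_snd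
  -- partial derivatives of f₁, f₂
  have hpd1f2 : ∀ p : ℝ × ℝ, pd1 (fun _ : ℝ × ℝ => k₂) p = 0 := by
    intro p; simp [pd1]
  have hpd2f1 : ∀ x y : ℝ, pd2 (fun q : ℝ × ℝ => φ q.2) (x, y) = g y := by
    intro x y
    have h := hasDerivAt_pd2 (fun q : ℝ × ℝ => φ q.2) hf1d x y
    exact (h.unique (hφ' y).hasDerivAt).symm ▸ rfl
  -- Step A : V₂ depends only on the first variable
  have hVeq : ∀ x y : ℝ, V₂ (x, y) = ψ x := by
    intro x y
    have hdiff : Differentiable ℝ (fun t => V₂ (x, t)) :=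
      hV₂d.comp ((differentiable_const x).prodMk differentiable_id)
    have hzero : ∀ t : ℝ, deriv (fun t => V₂ (x, t)) t = 0 := by
      intro t
      have hK2 := (hK (x, t)).2.1
      simp only [hpd1f2, mul_zero, zero_mul, sub_zero] at hK2
      have h0 : pd2 V₂ (x, t) = 0 := by
        rcases mul_eq_zero.mp hK2 with h | h
        · exact absurd h hk₂
        · exact h
      rw [(hasDerivAt_pd2 V₂ hV₂d x t).deriv, h0]
    exact is_const_of_deriv_eq_zero hdiff hzero y 0
  -- Step B : formula for pd1 V₁
  have hB : ∀ x y : ℝ, pd1 V₁ (x, y) = k₂ * g y * ψ x / (φ y) ^ 2 := by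
    intro x y
    have hK1 := (hK (x, y)).1
    simp only [hpd2f1] at hK1
    rw [hVeq x y] at hK1
    have hφy := hφ0 y
    field_simp at hK1 ⊢
    linarith [hK1]
  -- pd1 V₂ = deriv ψ
  have hpd1V₂ : ∀ x y : ℝ, pd1 V₂ (x, y) = deriv ψ x := by
    intro x y
    have h := hasDerivAt_pd1 V₂ hV₂d x y
    rw [show (fun s => V₂ (s, y)) = ψ from funext fun s => hVeq s y] at h
    exact (h.deriv).symm ▸ rfl
  -- Step C : the third Killing equation in usable form
  have hC : ∀ x y : ℝ, φ y * deriv ψ x + k₂ * pd2 V₁ (x, y)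
      + k₂ * g y / φ y * V₁ (x, y) = 0 := by
    intro x y
    have hK3 := (hK (x, y)).2.2
    simp only [hpd1f2, hpd2f1, hpd1V₂, mul_zero, zero_mul, add_zero] at hK3
    have : k₂ / φ y * g y * V₁ (x, y) = k₂ * g y / φ y * V₁ (x, y) := by ring
    linarith [hK3, this]
  -- Step D : derivative of C in the first variable
  have hdψ : Differentiable ℝ (deriv ψ) :=
    (contDiff_infty_iff_deriv.mp hψC).2.differentiable (by simp)
  have hpd2V₁d : Differentiable ℝ (pd2 V₁) := (pd2_contDiff V₁ hV₁).differentiable (by simp)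
  have hpd1V₁d : Differentiable ℝ (pd1 V₁) := (pd1_contDiff V₁ hV₁).differentiable (by simp)
  have hD : ∀ x y : ℝ, φ y * deriv (deriv ψ) x + k₂ * pd2 (pd1 V₁) (x, y)
      + k₂ * g y / φ y * pd1 V₁ (x, y) = 0 := by
    intro x y
    have h1 : HasDerivAt (fun s => deriv ψ s) (deriv (deriv ψ) x) x := (hdψ x).hasDerivAt
    have h2 : HasDerivAt (fun s => pd2 V₁ (s, y)) (pd1 (pd2 V₁) (x, y)) x :=
      hasDerivAt_pd1 (pd2 V₁) hpd2V₁d x y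
    have h3 : HasDerivAt (fun s => V₁ (s, y)) (pd1 V₁ (x, y)) x :=
      hasDerivAt_pd1 V₁ hV₁d x y
    have htot : HasDerivAt
        (fun s => φ y * deriv ψ s + k₂ * pd2 V₁ (s, y) + k₂ * g y / φ y * V₁ (s, y))
        (φ y * deriv (deriv ψ) x + k₂ * pd1 (pd2 V₁) (x, y)
          + k₂ * g y / φ y * pd1 V₁ (x, y)) x :=
      ((h1.const_mul (φ y)).add (h2.const_mul k₂)).add (h3.const_mul (k₂ * g y / φ y))
    rw [show (fun s => φ y * deriv ψ s + k₂ * pd2 V₁ (s, y)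
        + k₂ * g y / φ y * V₁ (s, y)) = fun _ => (0 : ℝ) from funext fun s => hC s y] at htot
    have hz := htot.unique (hasDerivAt_const x 0)
    rw [pd_symm V₁ hV₁ (x, y)] at hz
    linarith [hz]
  -- Step E : compute pd2 (pd1 V₁) explicitly
  have hE : ∀ x y : ℝ, pd2 (pd1 V₁) (x, y) =
      (k₂ * deriv g y * ψ x * (φ y) ^ 2 - k₂ * g y * ψ x * (2 * φ y ^ 1 * g y))
        / ((φ y) ^ 2) ^ 2 := by
    intro x y
    have hnum : HasDerivAt (fun t => k₂ * g t * ψ x) (k₂ * deriv g y * ψ x) y :=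
      (((hgd y).hasDerivAt.const_mul k₂).mul_const (ψ x))
    have hden : HasDerivAt (fun t => (φ t) ^ 2) (2 * φ y ^ 1 * g y) y := by
      have h : HasDerivAt (fun t => (φ t) ^ 2) (((2 : ℕ) : ℝ) * φ y ^ (2 - 1) * g y) y :=
        (hφ' y).hasDerivAt.pow 2
      simpa using h
    have hq := hnum.div hden (pow_ne_zero 2 (hφ0 y))
    have h := hasDerivAt_pd2 (pd1 V₁) hpd1V₁d x y
    rw [show (fun t => pd1 V₁ (x, t)) = fun t => k₂ * g t * ψ x / (φ t) ^ 2 from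
      funext fun t => hB x t] at h
    exact h.unique hq
  -- Step G : conclude
  obtain ⟨p₀, hp₀⟩ := not_forall.mp hV₂0
  have hψ0 : ψ p₀.1 ≠ 0 := by
    intro h; exact hp₀ (by rw [← Prod.mk.eta (p := p₀), hVeq p₀.1 p₀.2, h])
  set x₀ := p₀.1
  refine ⟨-(deriv (deriv ψ) x₀) / (k₂ ^ 2 * ψ x₀), fun t => ?_⟩
  have hDt := hD x₀ t
  rw [hE x₀ t, hB x₀ t] at hDt
  have hφt := hφ0 t
  have key : deriv g t * φ t * k₂ ^ 2 * ψ x₀ - g t ^ 2 * k₂ ^ 2 * ψ x₀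
      + φ t ^ 4 * deriv (deriv ψ) x₀ = 0 := by
    apply mul_left_cancel₀ (pow_ne_zero 4 hφt)
    field_simp at hDt
    linear_combination (φ t ^ 4) * hDt
  field_simp
  linear_combination key
end
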